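/- Let M ⊆ B(H,K) be a closed TRO such that the C*-algebra [M M*] is unital with unit I_K, and set A := [M* M]. Let J₁, J₂ ⊆ B(H) be norm-closed subspaces satisfying [A Jᵢ A] = Jᵢ for i = 1, 2. Then [M (J₁ ∩ J₂) M*] = [M J₁ M*] ∩ [M J₂ M*], where [·] denotes closed linear span of the set of all indicated products. -/

import Mathlib

open ContinuousLinearMap

/-- The set of products `a ∘L b` with `a ∈ A`, `b ∈ B`. -/
def opMulSet {H K L : Type*} [NormedAddCommGroup H] [NormedSpace ℂ H]
    [NormedAddCommGroup K] [NormedSpace ℂ K] [NormedAddCommGroup L] [NormedSpace ℂ L]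
    (A : Set (K →L[ℂ] L)) (B : Set (H →L[ℂ] K)) : Set (H →L[ℂ] L) :=
  {x | ∃ a ∈ A, ∃ b ∈ B, x = a ∘L b}

/-- The set of adjoints of elements of `M`. -/
noncomputable def opAdjSet {H K : Type*}
    [NormedAddCommGroup H] [InnerProductSpace ℂ H] [CompleteSpace H]
    [NormedAddCommGroup K] [InnerProductSpace ℂ K] [CompleteSpace K]
    (M : Set (H →L[ℂ] K)) : Set (K →L[ℂ] H) :=
  {x | ∃ m ∈ M, x = adjoint m}

/-- Closed linear span. -/
def cSpan {E : Type*} [NormedAddCommGroup E] [NormedSpace ℂ E] (s : Set E) : Set E :=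
  closure ((Submodule.span ℂ s : Submodule ℂ E) : Set E)

/-! If `x ∈ [M J₁ M*] ∩ [M J₂ M*]`, then each compression `m* x n` (`m, n ∈ M`)
lies in `[A Jᵢ A] = Jᵢ` for both `i`, hence in `J₁ ∩ J₂`. Since `I_K ∈ [M M*]`,
`x = I_K x I_K ∈ [M M*] x [M M*] ⊆ [M (M* x M) M*] ⊆ [M (J₁ ∩ J₂) M*]`. -/

section cSpan

variable {E F : Type*} [NormedAddCommGroup E] [NormedSpace ℂ E]
  [NormedAddCommGroup F] [NormedSpace ℂ F]

lemma subset_cSpan (s : Set E) : s ⊆ cSpan s :=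
  fun _ hx => subset_closure (Submodule.subset_span hx)

lemma cSpan_mono {s t : Set E} (h : s ⊆ t) : cSpan s ⊆ cSpan t :=
  closure_mono (Submodule.span_mono h)

lemma map_mem_cSpan (f : E →L[ℂ] F) {s : Set E} {t : Set F}
    (h : ∀ y ∈ s, f y ∈ cSpan t) {x : E} (hx : x ∈ cSpan s) : f x ∈ cSpan t := by
  have hspan : Submodule.span ℂ s ≤
      (Submodule.span ℂ t).topologicalClosure.comap (f : E →ₗ[ℂ] F) :=
    Submodule.span_le.2 h
  exact closure_minimal hspan
    ((Submodule.isClosed_topologicalClosure _).preimage f.continuous) hx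

end cSpan

lemma opMulSet_mono {H K L : Type*} [NormedAddCommGroup H] [NormedSpace ℂ H]
    [NormedAddCommGroup K] [NormedSpace ℂ K] [NormedAddCommGroup L] [NormedSpace ℂ L]
    {A A' : Set (K →L[ℂ] L)} {B B' : Set (H →L[ℂ] K)} (hA : A ⊆ A') (hB : B ⊆ B') :
    opMulSet A B ⊆ opMulSet A' B' := by
  rintro _ ⟨a, ha, b, hb, rfl⟩
  exact ⟨a, hA ha, b, hB hb, rfl⟩

section TRO

variable {H K : Type*} [NormedAddCommGroup H] [InnerProductSpace ℂ H] [CompleteSpace H]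
  [NormedAddCommGroup K] [InnerProductSpace ℂ K] [CompleteSpace K]

lemma adjoint_comp_comp_mem_of_mem_cSpan {M : Set (H →L[ℂ] K)} {A J : Set (H →L[ℂ] H)}
    (hMA : opMulSet (opAdjSet M) M ⊆ A) (hJ : cSpan (opMulSet A (opMulSet J A)) = J)
    {x : K →L[ℂ] K} (hx : x ∈ cSpan (opMulSet M (opMulSet J (opAdjSet M))))
    {m n : H →L[ℂ] K} (hm : m ∈ M) (hn : n ∈ M) : adjoint m ∘L x ∘L n ∈ J := by
  rw [← hJ]
  refine map_mem_cSpan ((compL ℂ H K H (adjoint m)).comp ((compL ℂ H K K).flip n)) ?_ hx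
  rintro _ ⟨m₁, hm₁, _, ⟨j, hj, _, ⟨n₁, hn₁, rfl⟩, rfl⟩, rfl⟩
  refine subset_cSpan _ ⟨adjoint m ∘L m₁, hMA ⟨_, ⟨m, hm, rfl⟩, m₁, hm₁, rfl⟩,
    j ∘L adjoint n₁ ∘L n, ⟨j, hj, _, hMA ⟨_, ⟨n₁, hn₁, rfl⟩, n, hn, rfl⟩, rfl⟩, ?_⟩
  ext
  simp

lemma comp_mem_cSpan_of_adjoint_comp_comp_mem {M : Set (H →L[ℂ] K)} {S : Set (H →L[ℂ] H)}
    (hunit : (1 : K →L[ℂ] K) ∈ cSpan (opMulSet M (opAdjSet M))) {x : K →L[ℂ] K}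
    (hx : ∀ m ∈ M, ∀ n ∈ M, adjoint m ∘L x ∘L n ∈ S) {u : K →L[ℂ] K}
    (hu : u ∈ opMulSet M (opAdjSet M)) :
    u ∘L x ∈ cSpan (opMulSet M (opMulSet S (opAdjSet M))) := by
  obtain ⟨m, hm, _, ⟨n, hn, rfl⟩, rfl⟩ := hu
  have hgen : ∀ v ∈ opMulSet M (opAdjSet M),
      m ∘L adjoint n ∘L x ∘L v ∈ cSpan (opMulSet M (opMulSet S (opAdjSet M))) := by
    rintro _ ⟨p, hp, _, ⟨q, hq, rfl⟩, rfl⟩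
    refine subset_cSpan _ ⟨m, hm, _, ⟨_, hx n hn p hp, adjoint q, ⟨q, hq, rfl⟩, rfl⟩, ?_⟩
    ext
    simp
  simpa [one_def] using
    map_mem_cSpan ((compL ℂ K K K (m ∘L adjoint n)).comp (compL ℂ K K K x)) hgen hunit

lemma mem_cSpan_of_adjoint_comp_comp_mem {M : Set (H →L[ℂ] K)} {S : Set (H →L[ℂ] H)}
    (hunit : (1 : K →L[ℂ] K) ∈ cSpan (opMulSet M (opAdjSet M))) {x : K →L[ℂ] K}
    (hx : ∀ m ∈ M, ∀ n ∈ M, adjoint m ∘L x ∘L n ∈ S) :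
    x ∈ cSpan (opMulSet M (opMulSet S (opAdjSet M))) := by
  simpa [one_def] using map_mem_cSpan ((compL ℂ K K K).flip x)
    (fun u hu => comp_mem_cSpan_of_adjoint_comp_comp_mem hunit hx hu) hunit

end TRO

theorem stmt_7_general {H K : Type*} [NormedAddCommGroup H] [InnerProductSpace ℂ H] [CompleteSpace H]
    [NormedAddCommGroup K] [InnerProductSpace ℂ K] [CompleteSpace K]
    (M : Submodule ℂ (H →L[ℂ] K))
    (hunit : (1 : K →L[ℂ] K) ∈
      cSpan (opMulSet (M : Set (H →L[ℂ] K)) (opAdjSet (M : Set (H →L[ℂ] K)))))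
    (A : Set (H →L[ℂ] H))
    (hA : A = cSpan (opMulSet (opAdjSet (M : Set (H →L[ℂ] K))) (M : Set (H →L[ℂ] K))))
    (J₁ J₂ : Submodule ℂ (H →L[ℂ] H))
    (hJ₁ : cSpan (opMulSet A (opMulSet (J₁ : Set (H →L[ℂ] H)) A)) = (J₁ : Set (H →L[ℂ] H)))
    (hJ₂ : cSpan (opMulSet A (opMulSet (J₂ : Set (H →L[ℂ] H)) A)) = (J₂ : Set (H →L[ℂ] H))) :
    cSpan (opMulSet (M : Set (H →L[ℂ] K))
        (opMulSet ((J₁ : Set (H →L[ℂ] H)) ∩ (J₂ : Set (H →L[ℂ] H)))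
          (opAdjSet (M : Set (H →L[ℂ] K)))))
      = cSpan (opMulSet (M : Set (H →L[ℂ] K))
          (opMulSet (J₁ : Set (H →L[ℂ] H)) (opAdjSet (M : Set (H →L[ℂ] K)))))
        ∩ cSpan (opMulSet (M : Set (H →L[ℂ] K))
          (opMulSet (J₂ : Set (H →L[ℂ] H)) (opAdjSet (M : Set (H →L[ℂ] K))))) := by
  have hMA : opMulSet (opAdjSet (M : Set (H →L[ℂ] K))) M ⊆ A := hA ▸ subset_cSpan _
  refine subset_antisymm (Set.subset_inter ?_ ?_) ?_
  · exact cSpan_mono (opMulSet_mono subset_rfl (opMulSet_mono Set.inter_subset_left subset_rfl))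
  · exact cSpan_mono (opMulSet_mono subset_rfl (opMulSet_mono Set.inter_subset_right subset_rfl))
  · rintro x ⟨hx₁, hx₂⟩
    exact mem_cSpan_of_adjoint_comp_comp_mem hunit fun m hm n hn =>
      ⟨adjoint_comp_comp_mem_of_mem_cSpan hMA hJ₁ hx₁ hm hn,
        adjoint_comp_comp_mem_of_mem_cSpan hMA hJ₂ hx₂ hm hn⟩

/-- For a closed TRO `M` with `[M M*]` unital, `A = [M* M]`, and closed subspaces
`J₁, J₂` with `[A Jᵢ A] = Jᵢ`, one has `[M (J₁ ∩ J₂) M*] = [M J₁ M*] ∩ [M J₂ M*]`. -/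
theorem stmt_7 {H K : Type*} [NormedAddCommGroup H] [InnerProductSpace ℂ H] [CompleteSpace H]
    [NormedAddCommGroup K] [InnerProductSpace ℂ K] [CompleteSpace K]
    (M : Submodule ℂ (H →L[ℂ] K)) (hMc : IsClosed (M : Set (H →L[ℂ] K)))
    (hTRO : ∀ a ∈ M, ∀ b ∈ M, ∀ c ∈ M, a ∘L adjoint b ∘L c ∈ M)
    (hunit : (1 : K →L[ℂ] K) ∈
      cSpan (opMulSet (M : Set (H →L[ℂ] K)) (opAdjSet (M : Set (H →L[ℂ] K)))))
    (A : Set (H →L[ℂ] H))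
    (hA : A = cSpan (opMulSet (opAdjSet (M : Set (H →L[ℂ] K))) (M : Set (H →L[ℂ] K))))
    (J₁ J₂ : Submodule ℂ (H →L[ℂ] H))
    (hJ₁c : IsClosed (J₁ : Set (H →L[ℂ] H))) (hJ₂c : IsClosed (J₂ : Set (H →L[ℂ] H)))
    (hJ₁ : cSpan (opMulSet A (opMulSet (J₁ : Set (H →L[ℂ] H)) A)) = (J₁ : Set (H →L[ℂ] H)))
    (hJ₂ : cSpan (opMulSet A (opMulSet (J₂ : Set (H →L[ℂ] H)) A)) = (J₂ : Set (H →L[ℂ] H))) :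
    cSpan (opMulSet (M : Set (H →L[ℂ] K))
        (opMulSet ((J₁ : Set (H →L[ℂ] H)) ∩ (J₂ : Set (H →L[ℂ] H)))
          (opAdjSet (M : Set (H →L[ℂ] K)))))
      = cSpan (opMulSet (M : Set (H →L[ℂ] K))
          (opMulSet (J₁ : Set (H →L[ℂ] H)) (opAdjSet (M : Set (H →L[ℂ] K)))))
        ∩ cSpan (opMulSet (M : Set (H →L[ℂ] K))
          (opMulSet (J₂ : Set (H →L[ℂ] H)) (opAdjSet (M : Set (H →L[ℂ] K))))) :=
  stmt_7_general M hunit A hA J₁ J₂ hJ₁ hJ₂
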